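/- arXiv:math/0404112 — 7 statements merged into one kernel-verified Lean document; each statement's English description precedes it below -/
import Mathlib

section
/- For every point (x,y) ∈ [0,1)², every λ = (λ₁,…,λ₅) ∈ ℝ₊⁵ and every δ > 0, there exists Q₀ (depending on x, y, λ, δ) such that for all integers Q ≥ Q₀ one has R^{(6)}_{(x,y),Q}(λ) > Q^{1/4−δ}. Consequently R^{(6)}_{(x,y),Q}(λ) → ∞ as Q → ∞. -/
/-!
By Dirichlet's theorem there is a nonzero `v = (a, b) ∈ ℤ²` with `max |a| |b| ≤ n` and
`|a y - b x| ≤ 1 / (n + 1)`. The lattice points `T v`, for `M` consecutive integers `T` with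
`Q / 2 < T max |a| |b| ≤ Q`, lie in `Box_Q` at distance `≥ Q / 4` from `(x, y)`, and the cross
product of `T v - (x, y)` and `T' v - (x, y)` is `(T' - T)(a y - b x)`. Hence all angles between
them at `(x, y)` are `O(M / (n Q²))`, which is below `2πλᵢ / N` for `M ≍ Q^{3/8}`, `n ≍ Q^{9/16}`;
then all `M (M - 1) ⋯ (M - 5) ≍ Q^{9/4}` ordered sextuples of these points are counted, and
`R ≫ Q^{1/4}`.
-/

open MeasureTheory Real

/-- The point of `ℝ²` (as `EuclideanSpace ℝ (Fin 2)`) associated to a pair of reals. -/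
noncomputable def toPt (x y : ℝ) : EuclideanSpace ℝ (Fin 2) :=
  (WithLp.equiv 2 (Fin 2 → ℝ)).symm ![x, y]

/-- The (undirected) angle `∠ P P_{(x,y)} P'` at the vertex `(x,y)` between the lattice
points `P` and `P'`. -/
noncomputable def angleAt (x y : ℝ) (P P' : ℤ × ℤ) : ℝ :=
  EuclideanGeometry.angle (toPt P.1 P.2) (toPt x y) (toPt P'.1 P'.2)

/-- `Box Q = ℤ² ∩ [-Q,Q]²`. -/
def Box (Q : ℕ) : Set (ℤ × ℤ) := {p | |p.1| ≤ (Q : ℤ) ∧ |p.2| ≤ (Q : ℤ)}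

/-- The 6-level correlation repartition `R^{(6)}_{(x,y),Q}(λ)`. -/
noncomputable def R6pt (x y : ℝ) (Q : ℕ) (lam : Fin 5 → ℝ) : ℝ :=
  (({P : Fin 6 → ℤ × ℤ | (∀ i, P i ∈ Box Q) ∧ Function.Injective P ∧
      ∀ i : Fin 5, |angleAt x y (P i.castSucc) (P i.succ)| ≤
        2 * π * lam i / (2 * (Q : ℝ) + 1) ^ 2}).ncard : ℝ) / (2 * (Q : ℝ) + 1) ^ 2

namespace InnerProductGeometry

variable {V : Type*} [NormedAddCommGroup V] [InnerProductSpace ℝ V]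

theorem angle_le_pi_div_two_of_inner_nonneg {u v : V} (h : 0 ≤ inner ℝ u v) :
    angle u v ≤ π / 2 :=
  Real.arccos_le_pi_div_two.2 (div_nonneg h (by positivity))

theorem angle_le_pi_div_two_mul_sin {u v : V} (h : 0 ≤ inner ℝ u v) :
    angle u v ≤ π / 2 * Real.sin (angle u v) := by
  have := Real.mul_le_sin (angle_nonneg u v) (angle_le_pi_div_two_of_inner_nonneg h)
  rw [div_mul_eq_mul_div, div_le_iff₀ pi_pos] at this
  nlinarith [pi_pos]

theorem mul_sub_mul_le_inner_smul_sub_smul_sub (v p : V) {s t : ℝ} (hs : 0 ≤ s) (ht : 0 ≤ t) :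
    (s * ‖v‖ - ‖p‖) * (t * ‖v‖ - ‖p‖) ≤ inner ℝ (s • v - p) (t • v - p) := by
  have hvp := real_inner_le_norm v p
  have hpv := real_inner_le_norm p v
  simp only [inner_sub_left, inner_sub_right, real_inner_smul_left, real_inner_smul_right,
    real_inner_self_eq_norm_sq, real_inner_comm p v] at hpv ⊢
  nlinarith [mul_nonneg hs (by linarith : 0 ≤ ‖v‖ * ‖p‖ - inner ℝ v p),
    mul_nonneg ht (by linarith : 0 ≤ ‖v‖ * ‖p‖ - inner ℝ v p)]

end InnerProductGeometry

open InnerProductGeometry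

def cross (u v : EuclideanSpace ℝ (Fin 2)) : ℝ := u 0 * v 1 - u 1 * v 0

theorem sin_angle_mul_norm_mul_norm_eq_abs_cross (u v : EuclideanSpace ℝ (Fin 2)) :
    Real.sin (angle u v) * (‖u‖ * ‖v‖) = |cross u v| := by
  rw [sin_angle_mul_norm_mul_norm, ← Real.sqrt_sq_eq_abs]
  congr 1
  simp only [cross, EuclideanSpace.inner_eq_star_dotProduct, dotProduct, Fin.sum_univ_two,
    star_trivial]
  ring

theorem cross_smul_sub_smul_sub (v p : EuclideanSpace ℝ (Fin 2)) (s t : ℝ) :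
    cross (s • v - p) (t • v - p) = (t - s) * cross v p := by
  simp only [cross, PiLp.sub_apply, PiLp.smul_apply, smul_eq_mul]
  ring

theorem angle_smul_sub_smul_sub_le {v p : EuclideanSpace ℝ (Fin 2)} {s t ρ : ℝ} (hρ : 0 < ρ)
    (hs : ρ ≤ s * ‖v‖ - ‖p‖) (ht : ρ ≤ t * ‖v‖ - ‖p‖) :
    angle (s • v - p) (t • v - p) ≤ π / 2 * (|t - s| * |cross v p|) / ρ ^ 2 := by
  have hpos {r : ℝ} (hr : ρ ≤ r * ‖v‖ - ‖p‖) : 0 ≤ r :=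
    (pos_of_mul_pos_left (by linarith [norm_nonneg p]) (norm_nonneg v)).le
  have hnorm {r : ℝ} (hr : ρ ≤ r * ‖v‖ - ‖p‖) : ρ ≤ ‖r • v - p‖ := by
    refine hr.trans (le_trans ?_ (norm_sub_norm_le _ _))
    rw [norm_smul, Real.norm_of_nonneg (hpos hr)]
  have hinner : 0 ≤ inner ℝ (s • v - p) (t • v - p) :=
    (mul_nonneg (by linarith) (by linarith)).trans
      (mul_sub_mul_le_inner_smul_sub_smul_sub v p (hpos hs) (hpos ht))
  have hA := hnorm hs
  have hB := hnorm ht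
  calc angle (s • v - p) (t • v - p)
      ≤ π / 2 * Real.sin (angle (s • v - p) (t • v - p)) := angle_le_pi_div_two_mul_sin hinner
    _ = π / 2 * |cross (s • v - p) (t • v - p)| / (‖s • v - p‖ * ‖t • v - p‖) := by
      rw [← sin_angle_mul_norm_mul_norm_eq_abs_cross, mul_div_assoc,
        mul_div_cancel_right₀ _ (mul_pos (hρ.trans_le hA) (hρ.trans_le hB)).ne']
    _ ≤ π / 2 * |cross (s • v - p) (t • v - p)| / ρ ^ 2 := by
      gcongr
      nlinarith
    _ = π / 2 * (|t - s| * |cross v p|) / ρ ^ 2 := by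
      rw [cross_smul_sub_smul_sub, abs_mul]

theorem exists_int_abs_mul_sub_mul_le (x y : ℝ) {n : ℕ} (hn : 0 < n) :
    ∃ a b : ℤ, 0 < max |a| |b| ∧ max |a| |b| ≤ n ∧
      |a * y - b * x| ≤ max |x| |y| / (n + 1) := by
  wlog hyx : |y| ≤ |x| generalizing x y
  · obtain ⟨a, b, hpos, hle, hab⟩ := this y x (le_of_not_ge hyx)
    refine ⟨b, a, by rwa [max_comm], by rwa [max_comm], ?_⟩
    rwa [abs_sub_comm, max_comm]
  obtain ⟨j, k, hk, hkn, hjk⟩ := Real.exists_int_int_abs_mul_sub_le (y / x) hn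
  have hξ : |y / x| ≤ 1 := by
    rw [abs_div]
    exact div_le_one_of_le₀ hyx (abs_nonneg x)
  have hkR : (k : ℝ) ≤ n := by exact_mod_cast hkn
  have hj : |j| ≤ n := by
    have hkξ : |k * (y / x)| ≤ n := by
      rw [abs_mul, abs_of_pos (by exact_mod_cast hk : (0 : ℝ) < k)]
      nlinarith [abs_nonneg (y / x)]
    have hsmall : 1 / ((n : ℝ) + 1) < 1 := by
      rw [div_lt_one (by positivity)]
      exact_mod_cast Nat.lt_add_of_pos_left hn
    have hjR : |(j : ℝ)| < n + 1 := by
      linarith [abs_sub_abs_le_abs_sub (j : ℝ) (k * (y / x)), abs_sub_comm (j : ℝ) (k * (y / x))]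
    have : |j| < n + 1 := by exact_mod_cast hjR
    omega
  refine ⟨k, j, lt_max_of_lt_left (abs_pos.2 hk.ne'), max_le (by rwa [abs_of_pos hk]) hj, ?_⟩
  rcases eq_or_ne x 0 with rfl | hx
  · obtain rfl : y = 0 := abs_nonpos_iff.1 (by simpa using hyx)
    simp
  calc |(k : ℝ) * y - j * x| = |x| * |k * (y / x) - j| := by
        rw [← abs_mul]; congr 1; field_simp
    _ ≤ max |x| |y| * (1 / (n + 1)) := by gcongr; exact le_max_left _ _
    _ = max |x| |y| / (n + 1) := by ring

@[simp] theorem toPt_apply_zero (x y : ℝ) : toPt x y 0 = x := rfl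

@[simp] theorem toPt_apply_one (x y : ℝ) : toPt x y 1 = y := rfl

theorem norm_toPt_le (x y : ℝ) : ‖toPt x y‖ ≤ |x| + |y| := by
  rw [EuclideanSpace.norm_eq, Real.sqrt_le_iff]
  refine ⟨by positivity, ?_⟩
  simp only [Fin.sum_univ_two, Real.norm_eq_abs, toPt_apply_zero, toPt_apply_one]
  nlinarith [mul_nonneg (abs_nonneg x) (abs_nonneg y)]

theorem max_abs_le_norm_toPt (x y : ℝ) : max |x| |y| ≤ ‖toPt x y‖ :=
  max_le (by simpa using PiLp.norm_apply_le (toPt x y) 0)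
    (by simpa using PiLp.norm_apply_le (toPt x y) 1)

theorem cross_toPt (a b x y : ℝ) : cross (toPt a b) (toPt x y) = a * y - b * x := rfl

theorem angleAt_mul_mul (x y : ℝ) (a b s t : ℤ) :
    angleAt x y (s * a, s * b) (t * a, t * b) =
      angle ((s : ℝ) • toPt a b - toPt x y) ((t : ℝ) • toPt a b - toPt x y) := by
  unfold angleAt EuclideanGeometry.angle
  congr 1 <;> ext i <;> fin_cases i <;> simp

theorem angleAt_mul_mul_le {x y : ℝ} (hx : |x| ≤ 1) (hy : |y| ≤ 1) {a b s t : ℤ} {Q : ℕ}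
    (hQ : 8 ≤ Q) (hs : Q < s * (2 * max |a| |b|)) (ht : Q < t * (2 * max |a| |b|)) :
    angleAt x y (s * a, s * b) (t * a, t * b) ≤
      8 * π * |(t : ℝ) - s| * |a * y - b * x| / Q ^ 2 := by
  have hQ' : (8 : ℝ) ≤ Q := by exact_mod_cast hQ
  have hp : ‖toPt x y‖ ≤ Q / 4 :=
    (norm_toPt_le x y).trans (by linarith)
  have hv : ((max |a| |b| : ℤ) : ℝ) ≤ ‖toPt a b‖ := by
    simpa using max_abs_le_norm_toPt (a : ℝ) (b : ℝ)
  have hρ {u : ℤ} (hu : Q < u * (2 * max |a| |b|)) : (Q : ℝ) / 4 ≤ u * ‖toPt a b‖ - ‖toPt x y‖ := by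
    have hlt : (Q : ℝ) < u * (2 * ((max |a| |b| : ℤ) : ℝ)) := by exact_mod_cast hu
    have hu0 : (0 : ℝ) ≤ u := by exact_mod_cast (show 0 ≤ u by
      nlinarith [abs_nonneg a, le_max_left |a| |b|, (Nat.cast_nonneg Q : (0 : ℤ) ≤ Q)])
    nlinarith [mul_le_mul_of_nonneg_left hv hu0]
  rw [angleAt_mul_mul]
  refine (angle_smul_sub_smul_sub_le (by positivity) (hρ hs) (hρ ht)).trans_eq ?_
  rw [cross_toPt]
  field_simp
  ring

theorem exists_injective_box_angleAt_le (x y : ℝ) (hx : |x| ≤ 1) (hy : |y| ≤ 1) {Q M n : ℕ}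
    (hn : 0 < n) (hQ : 8 ≤ Q) (hMn : 2 * M * n ≤ Q) :
    ∃ f : Fin M → ℤ × ℤ, Function.Injective f ∧ (∀ t, f t ∈ Box Q) ∧
      ∀ s t, angleAt x y (f s) (f t) ≤ 8 * π * M / ((n + 1) * Q ^ 2) := by
  obtain ⟨a, b, hm0, hmn, hcross⟩ := exists_int_abs_mul_sub_mul_le x y hn
  set m := max |a| |b| with hm
  set t₀ : ℤ := Q / (2 * m) + 1
  have ht₀ : Q < t₀ * (2 * m) := Int.lt_ediv_add_one_mul_self _ (by omega)
  have ht₀' : (t₀ - 1) * (2 * m) ≤ Q := by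
    simpa [t₀] using Int.ediv_mul_le (Q : ℤ) (by omega : 2 * m ≠ 0)
  set T : Fin M → ℤ := fun t => t₀ + t
  have hT_lt : ∀ t, Q < T t * (2 * m) := fun t => by
    nlinarith [(Nat.cast_nonneg t : (0 : ℤ) ≤ t)]
  have hT_le : ∀ t, T t * m ≤ Q := fun t => by
    have hMn' : 2 * M * m ≤ (Q : ℤ) := by
      calc 2 * M * m ≤ 2 * M * (n : ℤ) := by gcongr
        _ ≤ Q := by exact_mod_cast hMn
    have : (t : ℤ) + 1 ≤ M := by exact_mod_cast t.isLt
    nlinarith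
  refine ⟨fun t => (T t * a, T t * b), ?_, ?_, ?_⟩
  · intro s t hst
    simp only [Prod.mk.injEq] at hst
    have hab : a ≠ 0 ∨ b ≠ 0 := by
      by_contra! h
      simp [hm, h.1, h.2] at hm0
    have : T s = T t := hab.elim (fun ha => mul_right_cancel₀ ha hst.1)
      (fun hb => mul_right_cancel₀ hb hst.2)
    exact Fin.ext (by simpa [T] using this)
  · intro t
    have hT0 : 0 ≤ T t := by nlinarith [hT_lt t]
    constructor <;> simp only [abs_mul, abs_of_nonneg hT0] <;>
      nlinarith [le_max_left |a| |b|, le_max_right |a| |b|, hT_le t]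
  · intro s t
    have hst : |(T t : ℝ) - T s| ≤ M := by
      have hs : (s : ℝ) + 1 ≤ M := by exact_mod_cast s.isLt
      have ht : (t : ℝ) + 1 ≤ M := by exact_mod_cast t.isLt
      rw [abs_le]
      constructor <;> push_cast [T] <;>
        linarith [Nat.cast_nonneg (α := ℝ) s, Nat.cast_nonneg (α := ℝ) t]
    have hcross' : |(a : ℝ) * y - b * x| ≤ 1 / (n + 1) :=
      hcross.trans (by gcongr; exact max_le hx hy)
    calc angleAt x y (T s * a, T s * b) (T t * a, T t * b)
        ≤ 8 * π * |(T t : ℝ) - T s| * |(a : ℝ) * y - b * x| / Q ^ 2 :=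
          angleAt_mul_mul_le hx hy hQ (hT_lt s) (hT_lt t)
      _ ≤ 8 * π * M * (1 / (n + 1)) / Q ^ 2 := by gcongr
      _ = 8 * π * M / ((n + 1) * Q ^ 2) := by field_simp

theorem finite_box (Q : ℕ) : (Box Q).Finite :=
  ((Set.finite_Icc (-(Q : ℤ)) Q).prod (Set.finite_Icc (-(Q : ℤ)) Q)).subset
    fun _ hp => ⟨abs_le.1 hp.1, abs_le.1 hp.2⟩

theorem descFactorial_div_le_R6pt {x y : ℝ} {Q M : ℕ} {lam : Fin 5 → ℝ} {f : Fin M → ℤ × ℤ}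
    (hinj : Function.Injective f) (hbox : ∀ t, f t ∈ Box Q)
    (hangle : ∀ s t i, angleAt x y (f s) (f t) ≤ 2 * π * lam i / (2 * (Q : ℝ) + 1) ^ 2) :
    (M.descFactorial 6 : ℝ) / (2 * (Q : ℝ) + 1) ^ 2 ≤ R6pt x y Q lam := by
  unfold R6pt
  gcongr
  set S := {P : Fin 6 → ℤ × ℤ | (∀ i, P i ∈ Box Q) ∧ Function.Injective P ∧
      ∀ i : Fin 5, |angleAt x y (P i.castSucc) (P i.succ)| ≤
        2 * π * lam i / (2 * (Q : ℝ) + 1) ^ 2}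
  have hS : S.Finite :=
    (Set.Finite.pi fun _ => finite_box Q).subset fun P hP i _ => hP.1 i
  have hrange : Set.range (fun e : Fin 6 ↪ Fin M => f ∘ e) ⊆ S := by
    rintro _ ⟨e, rfl⟩
    refine ⟨fun i => hbox _, hinj.comp e.injective, fun i => ?_⟩
    exact (abs_of_nonneg (EuclideanGeometry.angle_nonneg _ _ _)).trans_le (hangle _ _ i)
  have hΦ : Function.Injective (fun e : Fin 6 ↪ Fin M => f ∘ e) := fun e e' h =>
    DFunLike.ext _ _ fun i => hinj (congrFun h i)
  calc M.descFactorial 6 = Nat.card (Fin 6 ↪ Fin M) := by simp [Fintype.card_embedding_eq]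
    _ = (Set.range fun e : Fin 6 ↪ Fin M => f ∘ e).ncard := (Set.ncard_range_of_injective hΦ).symm
    _ ≤ S.ncard := Set.ncard_le_ncard hrange hS

theorem eight_pi_mul_div_le_two_pi_mul_div {M n Q q l : ℝ} (hq : 0 < q) (hQ : 1 ≤ Q)
    (hM : M ≤ q ^ 6) (hn : q ^ 9 ≤ n + 1) (hl : 36 ≤ l * q ^ 3) :
    8 * π * M / ((n + 1) * Q ^ 2) ≤ 2 * π * l / (2 * Q + 1) ^ 2 := by
  have hl0 : 0 ≤ l := (pos_of_mul_pos_left (by linarith) (pow_pos hq 3).le).le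
  calc 8 * π * M / ((n + 1) * Q ^ 2) ≤ 8 * π * q ^ 6 / (q ^ 9 * Q ^ 2) := by gcongr
    _ = 2 * π * (36 / q ^ 3) / (9 * Q ^ 2) := by field_simp; ring
    _ ≤ 2 * π * l / (9 * Q ^ 2) := by
      gcongr
      rwa [div_le_iff₀ (by positivity)]
    _ ≤ 2 * π * l / (2 * Q + 1) ^ 2 := by
      gcongr
      nlinarith

theorem pow_div_le_descFactorial_div {M : ℕ} {Q q : ℝ} (hq : 2 ≤ q) (hQ : Q = q ^ 16)
    (hM : q ^ 6 < M + 1) :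
    q ^ 4 / 576 ≤ (M.descFactorial 6 : ℝ) / (2 * Q + 1) ^ 2 := by
  have hq6 : 64 ≤ q ^ 6 := by nlinarith [pow_le_pow_left₀ (by norm_num) hq 6]
  have hQ1 : 1 ≤ Q := by rw [hQ]; exact one_le_pow₀ (by linarith)
  have hQsq : (2 * Q + 1) ^ 2 ≤ 9 * (q ^ 16) ^ 2 := by rw [← hQ]; nlinarith
  have hQsq0 : 0 < (2 * Q + 1) ^ 2 := by positivity
  have hM5 : q ^ 6 / 2 ≤ ((M + 1 - 6 : ℕ) : ℝ) := by
    have : 5 ≤ M := by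
      have : (5 : ℝ) < M := by linarith
      exact_mod_cast this.le
    rw [Nat.cast_sub (by omega)]
    push_cast
    linarith
  calc q ^ 4 / 576 = (q ^ 6 / 2) ^ 6 / (9 * (q ^ 16) ^ 2) := by field_simp; ring
    _ ≤ ((M + 1 - 6 : ℕ) : ℝ) ^ 6 / (2 * Q + 1) ^ 2 := by gcongr
    _ ≤ (M.descFactorial 6 : ℝ) / (2 * Q + 1) ^ 2 := by
      gcongr
      exact_mod_cast Nat.pow_sub_le_descFactorial M 6

-- Writing `Q = q¹⁶` makes the exponents `3/8`, `9/16` and `1/4` of `M`, `n` and the bound integral.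
theorem pow_div_le_R6pt {x y : ℝ} (hx : |x| ≤ 1) (hy : |y| ≤ 1) {lam : Fin 5 → ℝ} {Q : ℕ} {q : ℝ}
    (hQ : (Q : ℝ) = q ^ 16) (hq : 2 ≤ q) (hlam : ∀ i, 36 ≤ lam i * q ^ 3) :
    q ^ 4 / 576 ≤ R6pt x y Q lam := by
  set M := ⌊q ^ 6⌋₊
  set n := ⌊q ^ 9⌋₊
  have hM : (M : ℝ) ≤ q ^ 6 := Nat.floor_le (by positivity)
  have hn : (n : ℝ) ≤ q ^ 9 := Nat.floor_le (by positivity)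
  have hn0 : 0 < n := Nat.floor_pos.2 (one_le_pow₀ (by linarith))
  have hQ8 : 8 ≤ Q := by
    have : (8 : ℝ) ≤ Q := by rw [hQ]; nlinarith [pow_le_pow_left₀ (by norm_num) hq 16]
    exact_mod_cast this
  have hMn : 2 * M * n ≤ Q := by
    have : (2 * M * n : ℝ) ≤ Q := calc
      (2 * M * n : ℝ) ≤ 2 * q ^ 6 * q ^ 9 := by gcongr
      _ = 2 * q ^ 15 := by ring
      _ ≤ q * q ^ 15 := by gcongr
      _ = Q := by rw [hQ]; ring
    exact_mod_cast this
  obtain ⟨f, hinj, hbox, hangle⟩ := exists_injective_box_angleAt_le x y hx hy hn0 hQ8 hMn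
  refine (pow_div_le_descFactorial_div hq hQ (Nat.lt_floor_add_one _)).trans
    (descFactorial_div_le_R6pt hinj hbox fun s t i => (hangle s t).trans ?_)
  exact eight_pi_mul_div_le_two_pi_mul_div (by linarith) (Nat.one_le_cast.2 (by omega))
    hM (Nat.lt_floor_add_one _).le (hlam i)

open Filter in
theorem eventually_rpow_div_le_R6pt {x y : ℝ} (hx : |x| ≤ 1) (hy : |y| ≤ 1) {lam : Fin 5 → ℝ}
    (hlam : ∀ i, 0 < lam i) :
    ∀ᶠ Q : ℕ in atTop, (Q : ℝ) ^ (1 / 4 : ℝ) / 576 ≤ R6pt x y Q lam := by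
  have hroot : Tendsto (fun Q : ℕ => (Q : ℝ) ^ (1 / 16 : ℝ)) atTop atTop :=
    (tendsto_rpow_atTop (by norm_num)).comp tendsto_natCast_atTop_atTop
  have hlarge : ∀ᶠ q : ℝ in atTop, 2 ≤ q ∧ ∀ i, 36 ≤ lam i * q ^ 3 :=
    (eventually_ge_atTop 2).and <| eventually_all.2 fun i =>
      ((tendsto_pow_atTop (by norm_num)).const_mul_atTop (hlam i)).eventually_ge_atTop 36
  filter_upwards [hroot.eventually hlarge] with Q ⟨hq, hlamq⟩
  have hpow (k : ℕ) : ((Q : ℝ) ^ (1 / 16 : ℝ)) ^ k = (Q : ℝ) ^ (k / 16 : ℝ) := by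
    rw [← Real.rpow_natCast, ← Real.rpow_mul (Nat.cast_nonneg Q)]
    ring_nf
  have hQ : (Q : ℝ) = ((Q : ℝ) ^ (1 / 16 : ℝ)) ^ 16 := by rw [hpow]; norm_num
  have h4 : (Q : ℝ) ^ (1 / 4 : ℝ) = ((Q : ℝ) ^ (1 / 16 : ℝ)) ^ 4 := by rw [hpow]; norm_num
  rw [h4]
  exact pow_div_le_R6pt hx hy hQ hq hlamq

/-- For every `(x,y) ∈ [0,1)²`, every `λ ∈ ℝ₊⁵` and every `δ > 0`, for all `Q` large
enough one has `R^{(6)}_{(x,y),Q}(λ) > Q^{1/4-δ}`; consequently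
`R^{(6)}_{(x,y),Q}(λ) → ∞` as `Q → ∞`. -/
theorem six_level_correlation_diverges (x y : ℝ)
    (hx : x ∈ Set.Ico (0 : ℝ) 1) (hy : y ∈ Set.Ico (0 : ℝ) 1)
    (lam : Fin 5 → ℝ) (hlam : ∀ i, 0 < lam i) (δ : ℝ) (hδ : 0 < δ) :
    (∃ Q0 : ℕ, ∀ Q : ℕ, Q0 ≤ Q → ((Q : ℝ) ^ ((1 / 4 : ℝ) - δ) < R6pt x y Q lam)) ∧
    Filter.Tendsto (fun Q : ℕ => R6pt x y Q lam) Filter.atTop Filter.atTop := by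
  have hR := eventually_rpow_div_le_R6pt (abs_le.2 ⟨by linarith [hx.1], hx.2.le⟩)
    (abs_le.2 ⟨by linarith [hy.1], hy.2.le⟩) hlam
  have hrpow {r : ℝ} (hr : 0 < r) : Filter.Tendsto (fun Q : ℕ => (Q : ℝ) ^ r) .atTop .atTop :=
    (tendsto_rpow_atTop hr).comp tendsto_natCast_atTop_atTop
  refine ⟨?_, Filter.tendsto_atTop_mono' _ hR ((hrpow (by norm_num)).atTop_div_const (by norm_num))⟩
  obtain ⟨Q₀, hQ₀⟩ := ((hR.and ((hrpow hδ).eventually_gt_atTop 576)).and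
    (Filter.eventually_gt_atTop 0)).exists_forall_of_atTop
  refine ⟨Q₀, fun Q hQ => ?_⟩
  obtain ⟨⟨hRQ, hδQ⟩, hQ0⟩ := hQ₀ Q hQ
  have hQpos : (0 : ℝ) < Q := by exact_mod_cast hQ0
  calc (Q : ℝ) ^ ((1 / 4 : ℝ) - δ) = (Q : ℝ) ^ (1 / 4 : ℝ) / (Q : ℝ) ^ δ := Real.rpow_sub hQpos _ _
    _ < (Q : ℝ) ^ (1 / 4 : ℝ) / 576 := by gcongr
    _ ≤ R6pt x y Q lam := hRQ
end

section
/- For every α₀, β₀ ∈ ℝ one has ∫_{pr₂𝒟} ψ(x) dx = ∬_{𝒟} √(Φ(t,x)) dt dx = 2π/3. -/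
open MeasureTheory Real

/-- `Φ_{α₀,β₀}(t,x) = 1 + t² - (β₀ - tα₀ + x)²`. -/
def Phi (α0 β0 t x : ℝ) : ℝ := 1 + t ^ 2 - (β0 - t * α0 + x) ^ 2

/-- The domain `𝒟_{α₀,β₀} = {(t,x) : 0 ≤ t ≤ 1, Φ(t,x) ≥ 0}`. -/
def Dom (α0 β0 : ℝ) : Set (ℝ × ℝ) :=
  {p | 0 ≤ p.1 ∧ p.1 ≤ 1 ∧ 0 ≤ Phi α0 β0 p.1 p.2}

/-- The projection `pr₂𝒟` of `𝒟` on the second coordinate. -/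
def pr2Dom (α0 β0 : ℝ) : Set ℝ := Prod.snd '' Dom α0 β0

/-- The `x`-section `I_x = {t ∈ [0,1] : Φ(t,x) ≥ 0}`. -/
def Isec (α0 β0 x : ℝ) : Set ℝ := {t | t ∈ Set.Icc (0 : ℝ) 1 ∧ 0 ≤ Phi α0 β0 t x}

/-- `ψ(x) = ∫_{I_x} √(Φ(t,x)) dt`. -/
noncomputable def psi (α0 β0 x : ℝ) : ℝ :=
  ∫ t in Isec α0 β0 x, Real.sqrt (Phi α0 β0 t x)

/-! For fixed `t`, `Φ(t, x) = (1 + t²) - (x + β₀ - tα₀)²`, so the graph of `x ↦ √Φ(t, x)`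
is a translated semicircle of radius `√(1 + t²)` and its integral over `ℝ` is `π (1 + t²) / 2`;
integrating over `t ∈ [0, 1]` gives `2π/3`. Since `√` vanishes on negative numbers, the
constraint `Φ ≥ 0` in `𝒟` and in `I_x` can be dropped: `𝒟` becomes the strip `[0, 1] × ℝ`, on
which Fubini applies in both orders. -/

open Set

theorem support_sqrt_sub_sq_subset (a : ℝ) :
    Function.support (fun x : ℝ => √(a - x ^ 2)) ⊆ Ioo (-√a) √a := by
  intro x hx
  exact Real.sq_lt.1 (sub_pos.1 (Real.sqrt_ne_zero'.1 hx))

theorem integrable_sqrt_sub_sq (a : ℝ) : Integrable fun x : ℝ => √(a - x ^ 2) :=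
  (integrableOn_iff_integrable_of_support_subset
    ((support_sqrt_sub_sq_subset a).trans Ioo_subset_Icc_self)).1
    (by fun_prop : Continuous fun x : ℝ => √(a - x ^ 2)).integrableOn_Icc

theorem integral_sqrt_sub_sq {a : ℝ} (ha : 0 ≤ a) : ∫ x, √(a - x ^ 2) = π * a / 2 := by
  obtain ⟨r, hr, rfl⟩ : ∃ r, 0 ≤ r ∧ a = r ^ 2 := ⟨√a, Real.sqrt_nonneg a, (Real.sq_sqrt ha).symm⟩
  have hscale (u : ℝ) : √(r ^ 2 - (r * u) ^ 2) = r * √(1 - u ^ 2) := by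
    rw [show r ^ 2 - (r * u) ^ 2 = r ^ 2 * (1 - u ^ 2) by ring, Real.sqrt_mul (sq_nonneg r),
      Real.sqrt_sq hr]
  have hsupp := (support_sqrt_sub_sq_subset (r ^ 2)).trans Ioo_subset_Ioc_self
  rw [Real.sqrt_sq hr] at hsupp
  have hsubst := intervalIntegral.smul_integral_comp_mul_left (a := -1) (b := 1)
    (fun x => √(r ^ 2 - x ^ 2)) r
  simp only [hscale, intervalIntegral.integral_const_mul, integral_sqrt_one_sub_sq, smul_eq_mul,
    mul_neg, mul_one] at hsubst
  rw [← intervalIntegral.integral_eq_integral_of_support_subset hsupp, ← hsubst]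
  ring

theorem setIntegral_sqrt_inter_nonneg {α : Type*} [MeasurableSpace α] {μ : Measure α}
    {s : Set α} (hs : MeasurableSet s) (f : α → ℝ) :
    ∫ x in s ∩ {x | 0 ≤ f x}, √(f x) ∂μ = ∫ x in s, √(f x) ∂μ :=
  (setIntegral_eq_of_subset_of_forall_sdiff_eq_zero hs inter_subset_left fun _ hx =>
    Real.sqrt_eq_zero_of_nonpos (le_of_not_ge fun h => hx.2 ⟨hx.1, h⟩)).symm

theorem Phi_eq_sub_sq (α0 β0 t x : ℝ) :
    Phi α0 β0 t x = (1 + t ^ 2) - (x + (β0 - t * α0)) ^ 2 := by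
  unfold Phi; ring

theorem integral_sqrt_Phi (α0 β0 t : ℝ) : ∫ x, √(Phi α0 β0 t x) = π * (1 + t ^ 2) / 2 := by
  simp only [Phi_eq_sub_sq]
  exact (integral_add_right_eq_self (fun x => √((1 + t ^ 2) - x ^ 2)) _).trans
    (integral_sqrt_sub_sq (by positivity))

theorem integrable_sqrt_Phi (α0 β0 : ℝ) :
    Integrable (fun p : ℝ × ℝ => √(Phi α0 β0 p.1 p.2))
      ((volume.restrict (Icc 0 1)).prod volume) := by
  refine (integrable_prod_iff (Continuous.aestronglyMeasurable (by unfold Phi; fun_prop))).2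
    ⟨ae_of_all _ fun t => ?_, ?_⟩
  · simp only [Phi_eq_sub_sq]
    exact (integrable_sqrt_sub_sq _).comp_add_right _
  · simp only [Real.norm_of_nonneg (Real.sqrt_nonneg _), integral_sqrt_Phi]
    exact (by fun_prop : Continuous fun t : ℝ => π * (1 + t ^ 2) / 2).integrableOn_Icc

theorem integral_Icc_integral_sqrt_Phi (α0 β0 : ℝ) :
    ∫ t in Icc 0 1, ∫ x, √(Phi α0 β0 t x) = 2 * π / 3 := by
  simp only [integral_sqrt_Phi]
  rw [integral_Icc_eq_integral_Ioc, ← intervalIntegral.integral_of_le zero_le_one,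
    intervalIntegral.integral_div, intervalIntegral.integral_const_mul,
    intervalIntegral.integral_add intervalIntegrable_const
      (intervalIntegral.intervalIntegrable_pow 2),
    integral_pow]
  norm_num
  ring

/-- Lemma 3.0 (ii): `∫_{pr₂𝒟} ψ(x) dx = ∬_𝒟 √(Φ(t,x)) dt dx = 2π/3`. -/
theorem psi_integral_eq (α0 β0 : ℝ) :
    (∫ x in pr2Dom α0 β0, psi α0 β0 x) = 2 * π / 3 ∧
    (∫ p in Dom α0 β0, Real.sqrt (Phi α0 β0 p.1 p.2)) = 2 * π / 3 := by
  have hpsi (x : ℝ) : psi α0 β0 x = ∫ t in Icc 0 1, √(Phi α0 β0 t x) :=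
    setIntegral_sqrt_inter_nonneg measurableSet_Icc _
  have hpsi_zero : ∀ x ∉ pr2Dom α0 β0, psi α0 β0 x = 0 := fun x hx => by
    rw [hpsi]
    exact setIntegral_eq_zero_of_forall_eq_zero fun t ht =>
      Real.sqrt_eq_zero_of_nonpos (le_of_not_ge fun h => hx ⟨(t, x), ⟨ht.1, ht.2, h⟩, rfl⟩)
  have hDom : Dom α0 β0 = Icc 0 1 ×ˢ univ ∩ {p | 0 ≤ Phi α0 β0 p.1 p.2} := by
    ext; simp [Dom, and_assoc]
  have hvol : volume.restrict (Icc (0 : ℝ) 1 ×ˢ univ)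
      = (volume.restrict (Icc (0 : ℝ) 1)).prod (volume : Measure ℝ) := by
    rw [Measure.volume_eq_prod, ← Measure.prod_restrict, Measure.restrict_univ]
  constructor
  · rw [setIntegral_eq_integral_of_forall_compl_eq_zero hpsi_zero]
    simp only [hpsi]
    rw [← integral_integral_swap (integrable_sqrt_Phi α0 β0), integral_Icc_integral_sqrt_Phi]
  · rw [hDom, setIntegral_sqrt_inter_nonneg (measurableSet_Icc.prod MeasurableSet.univ), hvol,
      integral_prod _ (integrable_sqrt_Phi α0 β0), integral_Icc_integral_sqrt_Phi]
end

section
/- Let F(a) = ua² + va + w with u, v, w ∈ ℝ and u ≠ 0. Then for any K ∈ ℝ and L ∈ ℝ, the Lebesgue measure of the set {a ∈ ℝ : K ≤ F(a) ≤ K + L²} is at most 2|L|/√|u|. -/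
/-!
Completing the square, `K ≤ F(a) ≤ K + L²` says (for `u > 0`) that `(a - a₀)²` lies in an interval
`[α, β]` of length `L²/u`. Such `a` form two intervals of length `√β - √α` each, and the
subadditivity of `√` gives `√β - √α ≤ √(β - α) = |L|/√u`. The case `u < 0` follows by negating `F`.
-/

open MeasureTheory Real

theorem Real.sqrt_sub_sqrt_le_sqrt_sub (x y : ℝ) : √y - √x ≤ √(y - x) := by
  rw [sub_le_iff_le_add, sqrt_le_iff]
  refine ⟨by positivity, ?_⟩
  nlinarith [sq_sqrt' (x := x), sq_sqrt' (x := y - x), le_max_left x 0, le_max_left (y - x) 0,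
    mul_nonneg (sqrt_nonneg (y - x)) (sqrt_nonneg x)]

theorem volume_setOf_le_sq_sub_le (c α β : ℝ) :
    volume {x : ℝ | α ≤ (x - c) ^ 2 ∧ (x - c) ^ 2 ≤ β} ≤ ENNReal.ofReal (2 * √(β - α)) := by
  have hsub : {x : ℝ | α ≤ (x - c) ^ 2 ∧ (x - c) ^ 2 ≤ β} ⊆
      Set.Icc (c - √β) (c - √α) ∪ Set.Icc (c + √α) (c + √β) := by
    rintro x ⟨hα, hβ⟩
    have hlo : √α ≤ |x - c| := by rw [← sqrt_sq_eq_abs]; exact sqrt_le_sqrt hα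
    have hhi : |x - c| ≤ √β := abs_le_sqrt hβ
    rcases le_total c x with hcx | hxc
    · rw [abs_of_nonneg (sub_nonneg.2 hcx)] at hlo hhi
      exact Or.inr ⟨by linarith, by linarith⟩
    · rw [abs_of_nonpos (sub_nonpos.2 hxc)] at hlo hhi
      exact Or.inl ⟨by linarith, by linarith⟩
  calc volume {x : ℝ | α ≤ (x - c) ^ 2 ∧ (x - c) ^ 2 ≤ β}
      ≤ volume (Set.Icc (c - √β) (c - √α)) + volume (Set.Icc (c + √α) (c + √β)) :=
        (measure_mono hsub).trans (measure_union_le _ _)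
    _ = ENNReal.ofReal (√β - √α) + ENNReal.ofReal (√β - √α) := by
        simp only [volume_Icc]; ring_nf
    _ ≤ ENNReal.ofReal √(β - α) + ENNReal.ofReal √(β - α) := by
        gcongr <;> exact sqrt_sub_sqrt_le_sqrt_sub α β
    _ = ENNReal.ofReal (2 * √(β - α)) := by
        rw [two_mul, ENNReal.ofReal_add (sqrt_nonneg _) (sqrt_nonneg _)]

theorem volume_setOf_le_quadratic_le_of_pos {u : ℝ} (hu : 0 < u) (v w K K' : ℝ) :
    volume {a : ℝ | K ≤ u * a ^ 2 + v * a + w ∧ u * a ^ 2 + v * a + w ≤ K'} ≤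
      ENNReal.ofReal (2 * √((K' - K) / u)) := by
  set a₀ := -v / (2 * u)
  set c := w - v ^ 2 / (4 * u)
  have hvertex : ∀ a, u * a ^ 2 + v * a + w = u * (a - a₀) ^ 2 + c := by
    intro a; simp only [a₀, c]; field_simp; ring
  have hset : {a : ℝ | K ≤ u * a ^ 2 + v * a + w ∧ u * a ^ 2 + v * a + w ≤ K'} =
      {a : ℝ | (K - c) / u ≤ (a - a₀) ^ 2 ∧ (a - a₀) ^ 2 ≤ (K' - c) / u} := by
    ext a
    simp only [Set.mem_ofPred_eq, hvertex, div_le_iff₀ hu, le_div_iff₀ hu]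
    constructor <;> rintro ⟨h₁, h₂⟩ <;> constructor <;> linarith
  rw [hset]
  convert volume_setOf_le_sq_sub_le a₀ _ _ using 4
  ring

theorem volume_setOf_le_quadratic_le {u : ℝ} (hu : u ≠ 0) (v w K K' : ℝ) :
    volume {a : ℝ | K ≤ u * a ^ 2 + v * a + w ∧ u * a ^ 2 + v * a + w ≤ K'} ≤
      ENNReal.ofReal (2 * √((K' - K) / |u|)) := by
  rcases hu.lt_or_gt with hneg | hpos
  · have hset : {a : ℝ | K ≤ u * a ^ 2 + v * a + w ∧ u * a ^ 2 + v * a + w ≤ K'} =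
        {a : ℝ | -K' ≤ -u * a ^ 2 + -v * a + -w ∧ -u * a ^ 2 + -v * a + -w ≤ -K} := by
      ext a
      simp only [Set.mem_ofPred_eq]
      constructor <;> rintro ⟨h₁, h₂⟩ <;> constructor <;> linarith
    rw [hset, abs_of_neg hneg]
    convert volume_setOf_le_quadratic_le_of_pos (neg_pos.2 hneg) _ _ _ _ using 5
    ring
  · rw [abs_of_pos hpos]
    exact volume_setOf_le_quadratic_le_of_pos hpos v w K K'

/-- Lemma 3.4: if `F(a) = ua² + va + w` with `u ≠ 0`, then for any `K` and `L` the set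
`{a : K ≤ F(a) ≤ K + L²}` has Lebesgue measure at most `2|L|/√|u|`. -/
theorem quadratic_sublevel_measure (u v w K L : ℝ) (hu : u ≠ 0) :
    volume {a : ℝ | K ≤ u * a ^ 2 + v * a + w ∧ u * a ^ 2 + v * a + w ≤ K + L ^ 2} ≤
      ENNReal.ofReal (2 * |L| / Real.sqrt |u|) := by
  have hroot : √((K + L ^ 2 - K) / |u|) = |L| / √|u| := by
    rw [add_sub_cancel_left, sqrt_div (sq_nonneg L), sqrt_sq_eq_abs]
  have hbound := volume_setOf_le_quadratic_le hu v w K (K + L ^ 2)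
  rwa [hroot, ← mul_div_assoc] at hbound
end

section
/- Let a, b, d be positive integers with gcd(a,b,d) = 1. Let d₁ denote the largest divisor of d which is relatively prime to b, and put d₂ = d/d₁. Then #{m ∈ ℤ : 0 ≤ m ≤ 2d−1, gcd(a + bm, d) = 1} = 2·φ(d₁)·d₂. -/
/-!
Write `d = d₁ d₂`. By maximality of `d₁`, every prime factor of `d₂` divides `b`, hence (as
`gcd(a, b, d) = 1`) does not divide `a`, and so divides no `a + bm`. Coprimality of `a + bm` with
`d` therefore only depends on `d₁` and on `m mod d₁`. Since `b` is a unit mod `d₁`, the map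
`m ↦ a + bm` permutes `ℤ/d₁`, so each of the `2d₂` blocks of length `d₁` in `[0, 2d)` contributes
`φ(d₁)`.
-/

open Finset Function
open scoped Nat

theorem Nat.count_mul_of_periodic {p : ℕ → Prop} [DecidablePred p] {n : ℕ} (hp : Periodic p n)
    (k : ℕ) : Nat.count p (k * n) = k * Nat.count p n := by
  induction k with
  | zero => simp
  | succ k ih =>
    have hshift : Nat.count (fun j => p (k * n + j)) n = Nat.count p n := by
      simp only [add_comm (k * n), show ∀ x, p (x + k * n) = p x from hp.nat_mul k]
    rw [add_mul, one_mul, Nat.count_add, ih, hshift, add_mul, one_mul]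

theorem ZMod.card_filter_range_natCast (n : ℕ) [NeZero n] (P : ZMod n → Prop) [DecidablePred P] :
    #{m ∈ range n | P ((m : ℕ) : ZMod n)} = #{x : ZMod n | P x} := by
  refine card_nbij' (fun m => (m : ZMod n)) ZMod.val ?_ ?_ ?_ ?_ <;> intro x hx <;>
    simp_all [ZMod.val_lt, Nat.mod_eq_of_lt]

theorem Nat.card_filter_range_coprime_add_mul (a b n : ℕ) (hbn : b.Coprime n) :
    #{m ∈ range n | (a + b * m).Coprime n} = φ n := by
  classical
  obtain rfl | hn := eq_or_ne n 0
  · simp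
  have : NeZero n := ⟨hn⟩
  obtain ⟨u, hu⟩ := (ZMod.isUnit_iff_coprime b n).2 hbn
  calc #{m ∈ range n | (a + b * m).Coprime n}
      = #{x : ZMod n | IsUnit (a + (u : ZMod n) * x)} := by
        simp only [← ZMod.isUnit_iff_coprime, hu, Nat.cast_add, Nat.cast_mul]
        exact ZMod.card_filter_range_natCast n fun x => IsUnit ((a : ZMod n) + b * x)
    _ = #{m ∈ range n | IsUnit ((m : ℕ) : ZMod n)} := by
        rw [ZMod.card_filter_range_natCast n IsUnit]
        exact card_equiv (u.mulLeft.trans (Equiv.addLeft (a : ZMod n))) (by simp)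
    _ = φ n := by
        simp only [ZMod.isUnit_iff_coprime, Nat.coprime_comm, Nat.totient_eq_card_coprime]

theorem Nat.Coprime.add_mul_of_forall_prime_dvd {a b n : ℕ} (ha : a.Coprime n)
    (hb : ∀ p, p.Prime → p ∣ n → p ∣ b) (m : ℕ) : (a + b * m).Coprime n :=
  Nat.coprime_of_dvd fun p hp hpa hpn => hp.ne_one <|
    Nat.eq_one_of_dvd_coprimes ha ((Nat.dvd_add_left ((hb p hp hpn).mul_right m)).mp hpa) hpn

theorem Nat.Prime.dvd_of_dvd_div_of_maximal_coprime {b d d₁ p : ℕ} (hd₁ : d₁ ∣ d)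
    (hd₁b : d₁.Coprime b) (hmax : ∀ e, e ∣ d → e.Coprime b → e ≤ d₁) (hp : p.Prime)
    (hpd : p ∣ d / d₁) : p ∣ b := by
  by_contra hpb
  have hd₁pos : 0 < d₁ := hmax 1 (one_dvd d) (Nat.coprime_one_left b)
  have hle : d₁ * p ≤ d₁ :=
    hmax _ (Nat.mul_dvd_of_dvd_div hd₁ hpd) (hd₁b.mul_left (hp.coprime_iff_not_dvd.2 hpb))
  exact (lt_mul_of_one_lt_right hd₁pos hp.one_lt).not_ge hle

theorem count_coprime_arith_progression_general (a b d : ℕ)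
    (habd : Nat.gcd a (Nat.gcd b d) = 1)
    (d₁ d₂ : ℕ) (hd₁ : d₁ ∣ d) (hd₁b : Nat.Coprime d₁ b)
    (hd₁max : ∀ e : ℕ, e ∣ d → Nat.Coprime e b → e ≤ d₁)
    (hd₂ : d₂ = d / d₁) :
    ((Finset.range (2 * d)).filter fun m => Nat.gcd (a + b * m) d = 1).card =
      2 * Nat.totient d₁ * d₂ := by
  have hd_eq : d = d₁ * d₂ := by rw [hd₂, Nat.mul_div_cancel' hd₁]
  have hb : ∀ p, p.Prime → p ∣ d₂ → p ∣ b := fun p hp hpd =>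
    hp.dvd_of_dvd_div_of_maximal_coprime hd₁ hd₁b hd₁max (hd₂ ▸ hpd)
  have ha : a.Coprime d₂ := Nat.coprime_of_dvd fun p hp hpa hpd => hp.not_dvd_one <|
    habd ▸ Nat.dvd_gcd hpa (Nat.dvd_gcd (hb p hp hpd) (hd_eq ▸ Nat.dvd_mul_left_of_dvd hpd d₁))
  have hcop (m : ℕ) : (a + b * m).Coprime d ↔ (a + b * m).Coprime d₁ := by
    rw [hd_eq, Nat.coprime_mul_iff_right]
    exact and_iff_left (ha.add_mul_of_forall_prime_dvd hb m)
  have hper : Periodic (fun m => (a + b * m).Coprime d₁) d₁ := fun m => by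
    simp only [mul_add, ← add_assoc, Nat.coprime_add_mul_right_left]
  calc #{m ∈ range (2 * d) | (a + b * m).Coprime d}
      = Nat.count (fun m => (a + b * m).Coprime d₁) (2 * d₂ * d₁) := by
        rw [Nat.count_eq_card_filter_range, show 2 * d = 2 * d₂ * d₁ by rw [hd_eq]; ring]
        exact congrArg card (filter_congr fun m _ => hcop m)
    _ = 2 * d₂ * φ d₁ := by
        rw [Nat.count_mul_of_periodic hper, Nat.count_eq_card_filter_range,
          Nat.card_filter_range_coprime_add_mul _ _ _ hd₁b.symm]
    _ = 2 * φ d₁ * d₂ := by ring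

/-- Lemma 4.1: let `a, b, d` be positive integers with `gcd(a,b,d) = 1`, let `d₁` be the
largest divisor of `d` relatively prime to `b`, and `d₂ = d/d₁`.  Then
`#{0 ≤ m ≤ 2d-1 : gcd(a + bm, d) = 1} = 2 φ(d₁) d₂`. -/
theorem count_coprime_arith_progression (a b d : ℕ)
    (ha : 0 < a) (hb : 0 < b) (hd : 0 < d)
    (habd : Nat.gcd a (Nat.gcd b d) = 1)
    (d₁ d₂ : ℕ) (hd₁ : d₁ ∣ d) (hd₁b : Nat.Coprime d₁ b)
    (hd₁max : ∀ e : ℕ, e ∣ d → Nat.Coprime e b → e ≤ d₁)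
    (hd₂ : d₂ = d / d₁) :
    ((Finset.range (2 * d)).filter fun m => Nat.gcd (a + b * m) d = 1).card =
      2 * Nat.totient d₁ * d₂ :=
  count_coprime_arith_progression_general a b d habd d₁ d₂ hd₁ hd₁b hd₁max hd₂
end

section
/- Let q be a positive integer, let a, b be integers with 1 ≤ a, b ≤ q and gcd(a,b,q) = 1, and let (A,B) ∈ 𝒩_{a,b,q} with B ≤ A. Let C = (bA − aB)/q (an integer by definition of 𝒩_{a,b,q}), let B̄ be the inverse of B modulo A, and let u be the unique integer with u ≡ −B̄·C (mod A) and 0 ≤ u ≤ A−1. Then v = (Bu + C)/A is an integer and 0 ≤ v ≤ B. -/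
/-!
Since `B̄` inverts `B` modulo `A`, `B u ≡ -B̄ B C ≡ -C`, so `A ∣ B u + C`. From
`q C = b A - a B` with `1 ≤ b ≤ q` and `a ≤ q` one gets `-B < C ≤ A`, hence
`-A < B u + C < A (B + 1)` because `0 ≤ u ≤ A - 1` and `1 ≤ B ≤ A`; a multiple of `A`
in this range is `A v` with `0 ≤ v ≤ B`.
-/

theorem Int.dvd_mul_add_of_modEq {A B Bbar C u : ℤ} (hBbar : B * Bbar ≡ 1 [ZMOD A])
    (hu : u ≡ -(Bbar * C) [ZMOD A]) : A ∣ B * u + C := by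
  have hBu : B * u ≡ -C [ZMOD A] :=
    calc B * u ≡ B * -(Bbar * C) [ZMOD A] := hu.mul_left B
      _ = B * Bbar * -C := by ring
      _ ≡ 1 * -C [ZMOD A] := hBbar.mul_right _
      _ = -C := one_mul _
  simpa [sub_eq_add_neg, add_comm] using (Int.ModEq.dvd hBu.symm)

theorem Int.nonneg_of_dvd_of_neg_lt {A x : ℤ} (h : A ∣ x) (hx : -A < x) : 0 ≤ x := by
  obtain ⟨k, rfl⟩ := h
  rcases le_or_gt A 0 with hA | hA
  · linarith
  · have hk : -1 < k := by nlinarith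
    exact mul_nonneg hA.le (by omega)

theorem neg_lt_of_mul_eq_mul_sub_mul {q a b A B C : ℤ} (hq : 0 < q) (haq : a ≤ q) (hb : 0 < b)
    (hA : 0 < A) (hB : 0 ≤ B) (hC : q * C = b * A - a * B) : -B < C := by
  have : q * -B < q * C := by nlinarith
  linarith [lt_of_mul_lt_mul_left this hq.le]

theorem le_of_mul_eq_mul_sub_mul {q a b A B C : ℤ} (hq : 0 < q) (ha : 0 ≤ a) (hbq : b ≤ q)
    (hA : 0 ≤ A) (hB : 0 ≤ B) (hC : q * C = b * A - a * B) : C ≤ A := by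
  have : q * C ≤ q * A := by nlinarith
  exact le_of_mul_le_mul_left this hq

theorem v_is_integer_and_bounded_general (q a b : ℕ)
    (hq : 0 < q) (haq : a ≤ q) (hb : 1 ≤ b) (hbq : b ≤ q)
    (A B : ℤ) (hB1 : 1 ≤ B)
    (hBA : B ≤ A)
    (C : ℤ) (hC : (q : ℤ) * C = (b : ℤ) * A - (a : ℤ) * B)
    (Bbar : ℤ) (hBbar : B * Bbar ≡ 1 [ZMOD A])
    (u : ℤ) (hu0 : 0 ≤ u) (hu1 : u ≤ A - 1) (hu : u ≡ -(Bbar * C) [ZMOD A]) :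
    A ∣ B * u + C ∧ 0 ≤ (B * u + C) / A ∧ (B * u + C) / A ≤ B := by
  have hA : 0 < A := by omega
  have hdvd : A ∣ B * u + C := Int.dvd_mul_add_of_modEq hBbar hu
  have hClo : -B < C :=
    neg_lt_of_mul_eq_mul_sub_mul (by omega) (by omega) (by omega) hA (by omega) hC
  have hChi : C ≤ A := le_of_mul_eq_mul_sub_mul (by omega) (by omega) (by omega) hA.le (by omega) hC
  have hBu0 : 0 ≤ B * u := mul_nonneg (by omega) hu0
  have hBu1 : B * u ≤ B * (A - 1) := mul_le_mul_of_nonneg_left hu1 (by omega)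
  have hnonneg : 0 ≤ B * u + C := Int.nonneg_of_dvd_of_neg_lt hdvd (by linarith)
  have hlt : B * u + C < (B + 1) * A := by linarith
  exact ⟨hdvd, Int.ediv_nonneg hnonneg hA.le,
    Int.lt_add_one_iff.mp (Int.ediv_lt_of_lt_mul hA hlt)⟩

/-- The construction following Lemma 4.2: let `(A,B) ∈ 𝒩_{a,b,q}` with `B ≤ A`, let
`C = (bA - aB)/q`, let `B̄` be the inverse of `B` modulo `A`, and let `u` be the unique
integer with `u ≡ -B̄C (mod A)` and `0 ≤ u ≤ A - 1`.  Then `v = (Bu + C)/A` is an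
integer and `0 ≤ v ≤ B`. -/
theorem v_is_integer_and_bounded (q a b : ℕ)
    (hq : 0 < q) (ha : 1 ≤ a) (haq : a ≤ q) (hb : 1 ≤ b) (hbq : b ≤ q)
    (habq : Nat.gcd a (Nat.gcd b q) = 1)
    (A B : ℤ) (hA1 : 1 ≤ A) (hA2 : A ≤ 2 * (q : ℤ)) (hB1 : 1 ≤ B) (hB2 : B ≤ 2 * (q : ℤ))
    (hAB : Int.gcd A B = 1) (hdvd : (q : ℤ) ∣ A * (b : ℤ) - B * (a : ℤ))
    (hBA : B ≤ A)
    (C : ℤ) (hC : (q : ℤ) * C = (b : ℤ) * A - (a : ℤ) * B)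
    (Bbar : ℤ) (hBbar : B * Bbar ≡ 1 [ZMOD A])
    (u : ℤ) (hu0 : 0 ≤ u) (hu1 : u ≤ A - 1) (hu : u ≡ -(Bbar * C) [ZMOD A]) :
    A ∣ B * u + C ∧ 0 ≤ (B * u + C) / A ∧ (B * u + C) / A ≤ B :=
  v_is_integer_and_bounded_general q a b hq haq hb hbq A B hB1 hBA C hC Bbar hBbar u hu0 hu1 hu
end

section
/- Let q, Q, M be positive integers with Q ≥ 12(q+1) and M ≤ ⌊Q/(4q)⌋, and let a, b be integers with 1 ≤ a, b ≤ q and gcd(a,b,q) = 1. Then: (i) every point P′ of 𝓜̃_{a,b,q} satisfies ‖P P′‖ ≥ Q/3 for every P ∈ [0,1]²; and (ii) 𝓜̃_{a,b,q} ⊆ [0,Q]². -/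
/-!
For `B ≤ A` the points of `𝓜_{A,B}` lie on the line `A y - B x = C` with `-B < C < A`, so the
point above `u ∈ [0, A)` has height `v ∈ [0, B]`. The window `s - M ≤ m ≤ s - 1`, `s = ⌊Q/A⌋`,
starts beyond `Q/2 - 2q ≥ Q/3 + 1` because `MA ≤ 2qM ≤ Q/2`, and it ends before `s`, so the
first coordinate lies in `[Q/3 + 1, Q]` and the second in `[0, sB] ⊆ [0, Q]`. A point whose
first (or, after the swap, second) coordinate is at least `Q/3 + 1` is at distance at least
`Q/3` from the unit square.
-/

open Real

/-- The integer `C = (bA - aB)/q` attached to a pair `(A,B) ∈ 𝒩_{a,b,q}`. -/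
def Cint (a b q : ℕ) (A B : ℤ) : ℤ := ((b : ℤ) * A - (a : ℤ) * B) / (q : ℤ)

/-- The set `𝓜_{A,B}` in the case `B ≤ A`: with `C = (bA-aB)/q`, `u` the unique integer
in `[0, A-1]` with `A ∣ Bu + C`, `v = (Bu+C)/A` and `s = ⌊Q/A⌋`, it is the set of lattice
points `(u + mA, v + mB)` with `s - M ≤ m ≤ s - 1`. -/
def MMle (a b q Q M : ℕ) (A B : ℤ) : Set (ℤ × ℤ) :=
  {p | ∃ u m : ℤ, 0 ≤ u ∧ u < A ∧ A ∣ (B * u + Cint a b q A B) ∧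
    (Q : ℤ) / A - (M : ℤ) ≤ m ∧ m ≤ (Q : ℤ) / A - 1 ∧
    p = (u + m * A, (B * u + Cint a b q A B) / A + m * B)}

/-- The set `𝓜_{A,B}`: for `A < B` it is obtained by the same recipe with the roles of
the two coordinates (and of `A` and `B`, `a` and `b`) exchanged. -/
def MMset (a b q Q M : ℕ) (A B : ℤ) : Set (ℤ × ℤ) :=
  if B ≤ A then MMle a b q Q M A B else Prod.swap '' MMle b a q Q M B A

/-- The predicate `(A,B) ∈ 𝒩_{a,b,q}`. -/
def NNpred (a b q : ℕ) (A B : ℤ) : Prop :=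
  1 ≤ A ∧ A ≤ 2 * (q : ℤ) ∧ 1 ≤ B ∧ B ≤ 2 * (q : ℤ) ∧ Int.gcd A B = 1 ∧
    (q : ℤ) ∣ (A * (b : ℤ) - B * (a : ℤ))

/-- `𝓜̃_{a,b,q} = ⋃_{(A,B) ∈ 𝒩_{a,b,q}} 𝓜_{A,B}`. -/
def MMtilde (a b q Q M : ℕ) : Set (ℤ × ℤ) :=
  ⋃ A : ℤ, ⋃ B : ℤ, ⋃ (_ : NNpred a b q A B), MMset a b q Q M A B

lemma div_three_le_sqrt_sq_add {Q x X t : ℝ} (hX : Q + 3 ≤ 3 * X) (hx : x ≤ 1) (ht : 0 ≤ t) :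
    Q / 3 ≤ √((x - X) ^ 2 + t) :=
  calc Q / 3 ≤ |x - X| := by rw [abs_sub_comm]; exact le_abs.mpr (Or.inl (by linarith))
    _ ≤ √((x - X) ^ 2 + t) := abs_le_sqrt (by linarith)

section Bounds

variable {q Q M a b : ℕ} {A B : ℤ}

lemma Cint_mem_Ioo (hq : 0 < q) (ha : 1 ≤ a) (haq : a ≤ q) (hb : 1 ≤ b) (hbq : b ≤ q)
    (hA : 1 ≤ A) (hB : 1 ≤ B) (hdvd : (q : ℤ) ∣ A * b - B * a) :
    -B < Cint a b q A B ∧ Cint a b q A B < A := by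
  have hCq : Cint a b q A B * q = b * A - a * B :=
    Int.ediv_mul_cancel (by rw [mul_comm (b : ℤ), mul_comm (a : ℤ)]; exact hdvd)
  have hqz : (0 : ℤ) < q := by exact_mod_cast hq
  have haz : (1 : ℤ) ≤ a := by exact_mod_cast ha
  have hbz : (1 : ℤ) ≤ b := by exact_mod_cast hb
  have haqz : (a : ℤ) ≤ q := by exact_mod_cast haq
  have hbqz : (b : ℤ) ≤ q := by exact_mod_cast hbq
  constructor
  · refine lt_of_mul_lt_mul_right ?_ hqz.le
    nlinarith
  · refine lt_of_mul_lt_mul_right ?_ hqz.le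
    nlinarith

lemma nonneg_and_le_of_mul_eq_mul_add {u v C : ℤ} (hBA : B ≤ A) (hB : 0 ≤ B) (hu : 0 ≤ u)
    (huA : u < A) (hC : -B < C ∧ C < A) (hv : v * A = B * u + C) : 0 ≤ v ∧ v ≤ B := by
  have hA : 0 < A := by omega
  constructor
  · have : -1 < v := lt_of_mul_lt_mul_right (by nlinarith) hA.le
    omega
  · have : v < B + 1 := lt_of_mul_lt_mul_right (by nlinarith) hA.le
    omega

lemma add_three_le_three_mul_window_start (hQ : 12 * (q + 1) ≤ Q) (hM : M ≤ Q / (4 * q))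
    (hA : 1 ≤ A) (hAq : A ≤ 2 * (q : ℤ)) : (Q : ℤ) + 3 ≤ 3 * ((Q / A - M) * A) := by
  have hMq : (M : ℤ) * (4 * q) ≤ Q := by
    exact_mod_cast (Nat.le_div_iff_mul_le (by omega)).mp hM
  have hQz : 12 * ((q : ℤ) + 1) ≤ Q := by exact_mod_cast hQ
  have hs : (Q : ℤ) < (Q / A + 1) * A := Int.lt_ediv_add_one_mul_self _ (by omega)
  have hMA : (M : ℤ) * A ≤ M * (2 * q) := mul_le_mul_of_nonneg_left hAq (by positivity)
  linarith

lemma MMle_bounds (hq : 0 < q) (hQ : 12 * (q + 1) ≤ Q) (hM : M ≤ Q / (4 * q))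
    (ha : 1 ≤ a) (haq : a ≤ q) (hb : 1 ≤ b) (hbq : b ≤ q) (hAq : A ≤ 2 * (q : ℤ)) (hB : 1 ≤ B)
    (hBA : B ≤ A) (hdvd : (q : ℤ) ∣ A * b - B * a) {p : ℤ × ℤ} (hp : p ∈ MMle a b q Q M A B) :
    (Q : ℤ) + 3 ≤ 3 * p.1 ∧ p.1 ≤ Q ∧ 0 ≤ p.2 ∧ p.2 ≤ Q := by
  obtain ⟨u, m, hu, huA, hAdvd, hm₁, hm₂, rfl⟩ := hp
  have hA : 1 ≤ A := hB.trans hBA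
  obtain ⟨hv₀, hvB⟩ := nonneg_and_le_of_mul_eq_mul_add hBA (by omega) hu huA
    (Cint_mem_Ioo hq ha haq hb hbq hA hB hdvd) (Int.ediv_mul_cancel hAdvd)
  set s := (Q : ℤ) / A
  have hstart := add_three_le_three_mul_window_start hQ hM hA hAq
  have hsA : s * A ≤ Q := Int.ediv_mul_le _ (by omega)
  have hm₀ : 0 ≤ m := by nlinarith
  refine ⟨?_, ?_, ?_, ?_⟩ <;> dsimp only
  · nlinarith
  · nlinarith
  · positivity
  · nlinarith

lemma MMtilde_bounds (hq : 0 < q) (hQ : 12 * (q + 1) ≤ Q) (hM : M ≤ Q / (4 * q))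
    (ha : 1 ≤ a) (haq : a ≤ q) (hb : 1 ≤ b) (hbq : b ≤ q) {p : ℤ × ℤ}
    (hp : p ∈ MMtilde a b q Q M) :
    (0 ≤ p.1 ∧ p.1 ≤ Q ∧ 0 ≤ p.2 ∧ p.2 ≤ Q) ∧ ((Q : ℤ) + 3 ≤ 3 * p.1 ∨ (Q : ℤ) + 3 ≤ 3 * p.2) := by
  simp only [MMtilde, Set.mem_iUnion] at hp
  obtain ⟨A, B, ⟨hA, hAq, hB, hBq, -, hdvd⟩, hp⟩ := hp
  unfold MMset at hp
  split_ifs at hp with hBA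
  · obtain ⟨h₁, h₂, h₃, h₄⟩ := MMle_bounds hq hQ hM ha haq hb hbq hAq hB hBA hdvd hp
    exact ⟨⟨by omega, h₂, h₃, h₄⟩, .inl h₁⟩
  · obtain ⟨p, hp, rfl⟩ := hp
    obtain ⟨h₁, h₂, h₃, h₄⟩ :=
      MMle_bounds hq hQ hM hb hbq ha haq hBq hA (by omega) (dvd_sub_comm.mp hdvd) hp
    rw [Prod.fst_swap, Prod.snd_swap]
    exact ⟨⟨h₃, h₄, by omega, h₂⟩, .inr h₁⟩

end Bounds

theorem MMtilde_far_and_in_box_general (q Q M a b : ℕ)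
    (hq : 0 < q) (hQ : 12 * (q + 1) ≤ Q)
    (hM' : M ≤ Q / (4 * q))
    (ha : 1 ≤ a) (haq : a ≤ q) (hb : 1 ≤ b) (hbq : b ≤ q) :
    (∀ p ∈ MMtilde a b q Q M, ∀ x y : ℝ,
      x ∈ Set.Icc (0 : ℝ) 1 → y ∈ Set.Icc (0 : ℝ) 1 →
      (Q : ℝ) / 3 ≤ Real.sqrt ((x - (p.1 : ℝ)) ^ 2 + (y - (p.2 : ℝ)) ^ 2)) ∧
    (∀ p ∈ MMtilde a b q Q M,
      0 ≤ p.1 ∧ p.1 ≤ (Q : ℤ) ∧ 0 ≤ p.2 ∧ p.2 ≤ (Q : ℤ)) := by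
  refine ⟨fun p hp x y hx hy => ?_, fun p hp => (MMtilde_bounds hq hQ hM' ha haq hb hbq hp).1⟩
  rcases (MMtilde_bounds hq hQ hM' ha haq hb hbq hp).2 with h | h
  · exact div_three_le_sqrt_sq_add (by exact_mod_cast h) hx.2 (sq_nonneg _)
  · rw [add_comm]
    exact div_three_le_sqrt_sq_add (by exact_mod_cast h) hy.2 (sq_nonneg _)

/-- Lemma 4.3 (i) and (ii): every point of `𝓜̃_{a,b,q}` is at distance at least `Q/3`
from the unit square, and `𝓜̃_{a,b,q} ⊆ [0,Q]²`. -/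
theorem MMtilde_far_and_in_box (q Q M a b : ℕ)
    (hq : 0 < q) (hQpos : 0 < Q) (hQ : 12 * (q + 1) ≤ Q)
    (hM : 0 < M) (hM' : M ≤ Q / (4 * q))
    (ha : 1 ≤ a) (haq : a ≤ q) (hb : 1 ≤ b) (hbq : b ≤ q)
    (hgcd : Nat.gcd a (Nat.gcd b q) = 1) :
    (∀ p ∈ MMtilde a b q Q M, ∀ x y : ℝ,
      x ∈ Set.Icc (0 : ℝ) 1 → y ∈ Set.Icc (0 : ℝ) 1 →
      (Q : ℝ) / 3 ≤ Real.sqrt ((x - (p.1 : ℝ)) ^ 2 + (y - (p.2 : ℝ)) ^ 2)) ∧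
    (∀ p ∈ MMtilde a b q Q M,
      0 ≤ p.1 ∧ p.1 ≤ (Q : ℤ) ∧ 0 ≤ p.2 ∧ p.2 ≤ (Q : ℤ)) :=
  MMtilde_far_and_in_box_general q Q M a b hq hQ hM' ha haq hb hbq
end

section
/- Let q, Q, M be positive integers with Q ≥ 12(q+1) and M ≤ ⌊Q/(4q)⌋, and let a, b be integers with 1 ≤ a, b ≤ q and gcd(a,b,q) = 1. Then the sets 𝓜_{A,B}, as (A,B) ranges over the pairs of 𝒩_{a,b,q} with B ≤ A, are pairwise disjoint. -/
lemma mul_eq_mul_of_parallel {R : Type*} [CommRing R] [IsDomain R] {A B A' B' z w : R}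
    (hz : z ≠ 0) (h : A * w = B * z) (h' : A' * w = B' * z) : A * B' = A' * B :=
  mul_right_cancel₀ hz (by linear_combination A' * h - A * h')

lemma Int.eq_of_mul_eq_mul_of_isCoprime {A B A' B' : ℤ} (hA : 0 < A) (hA' : 0 < A')
    (hAB : IsCoprime A B) (hAB' : IsCoprime A' B') (h : A * B' = A' * B) :
    A = A' ∧ B = B' := by
  have hAA' : A = A' := Int.dvd_antisymm hA.le hA'.le
    (hAB.dvd_of_dvd_mul_right ⟨B', h.symm⟩) (hAB'.dvd_of_dvd_mul_right ⟨B, h⟩)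
  subst hAA'
  exact ⟨rfl, (mul_left_cancel₀ hA.ne' h).symm⟩

lemma mul_Cint_of_dvd {a b q : ℕ} {A B : ℤ} (h : (q : ℤ) ∣ A * b - B * a) :
    (q : ℤ) * Cint a b q A B = b * A - a * B :=
  Int.mul_ediv_cancel' (by rwa [mul_comm (b : ℤ), mul_comm (a : ℤ)])

section MMle

variable {a b q Q M : ℕ} {A B : ℤ} {p : ℤ × ℤ}

lemma line_of_mem_MMle (hp : p ∈ MMle a b q Q M A B) : A * p.2 - B * p.1 = Cint a b q A B := by
  obtain ⟨u, m, -, -, hdvd, -, -, rfl⟩ := hp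
  linear_combination Int.mul_ediv_cancel' hdvd

lemma add_one_sub_le_fst_of_mem_MMle (hA : 0 < A) (hp : p ∈ MMle a b q Q M A B) :
    (Q : ℤ) + 1 - A - M * A ≤ p.1 := by
  obtain ⟨u, m, hu, -, -, hm, -, rfl⟩ := hp
  have hQA := Int.lt_ediv_add_one_mul_self (Q : ℤ) hA
  nlinarith

lemma two_le_fst_of_mem_MMle (hQ : 12 * (q + 1) ≤ Q) (hM : M ≤ Q / (4 * q)) (hA : 1 ≤ A)
    (hAq : A ≤ 2 * (q : ℤ)) (hp : p ∈ MMle a b q Q M A B) : 2 ≤ p.1 := by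
  have hMQ : ((M * (4 * q) : ℕ) : ℤ) ≤ Q :=
    Int.ofNat_le.mpr ((Nat.le_div_iff_mul_le (by omega)).mp hM)
  have hQ' : ((12 * (q + 1) : ℕ) : ℤ) ≤ Q := Int.ofNat_le.mpr hQ
  push_cast at hMQ hQ'
  have hMA : (M : ℤ) * A ≤ M * (2 * q) := mul_le_mul_of_nonneg_left hAq (by positivity)
  linarith [add_one_sub_le_fst_of_mem_MMle (by omega) hp]

lemma parallel_of_mem_MMle (hdvd : (q : ℤ) ∣ A * b - B * a) (hp : p ∈ MMle a b q Q M A B) :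
    A * (q * p.2 - b) = B * (q * p.1 - a) := by
  linear_combination (q : ℤ) * line_of_mem_MMle hp + mul_Cint_of_dvd hdvd

end MMle

theorem MMle_pairwise_disjoint_general (q Q M a b : ℕ)
    (hQ : 12 * (q + 1) ≤ Q)
    (hM' : M ≤ Q / (4 * q))
    (haq : a ≤ q) :
    ∀ A B A' B' : ℤ, NNpred a b q A B → NNpred a b q A' B' →
      B ≤ A → B' ≤ A' → (A, B) ≠ (A', B') →
      Disjoint (MMle a b q Q M A B) (MMle a b q Q M A' B') := by
  rintro A B A' B' ⟨hA, hAq, -, -, hcop, hdvd⟩ ⟨hA', -, -, -, hcop', hdvd'⟩ - - hne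
  rw [Set.disjoint_left]
  intro p hp hp'
  have hx : 2 ≤ p.1 := two_le_fst_of_mem_MMle hQ hM' hA hAq hp
  have hz : (q : ℤ) * p.1 - a ≠ 0 := by
    have : (a : ℤ) ≤ q := by exact_mod_cast haq
    nlinarith
  have hcross : A * B' = A' * B :=
    mul_eq_mul_of_parallel hz (parallel_of_mem_MMle hdvd hp) (parallel_of_mem_MMle hdvd' hp')
  obtain ⟨rfl, rfl⟩ := Int.eq_of_mul_eq_mul_of_isCoprime hA hA'
    (Int.isCoprime_iff_gcd_eq_one.mpr hcop) (Int.isCoprime_iff_gcd_eq_one.mpr hcop') hcross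
  exact hne rfl

/-- Lemma 4.3 (iii): the sets `𝓜_{A,B}`, for `(A,B) ∈ 𝒩_{a,b,q}` with `B ≤ A`, are
pairwise disjoint. -/
theorem MMle_pairwise_disjoint (q Q M a b : ℕ)
    (hq : 0 < q) (hQpos : 0 < Q) (hQ : 12 * (q + 1) ≤ Q)
    (hM : 0 < M) (hM' : M ≤ Q / (4 * q))
    (ha : 1 ≤ a) (haq : a ≤ q) (hb : 1 ≤ b) (hbq : b ≤ q)
    (hgcd : Nat.gcd a (Nat.gcd b q) = 1) :
    ∀ A B A' B' : ℤ, NNpred a b q A B → NNpred a b q A' B' →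
      B ≤ A → B' ≤ A' → (A, B) ≠ (A', B') →
      Disjoint (MMle a b q Q M A B) (MMle a b q Q M A' B') :=
  MMle_pairwise_disjoint_general q Q M a b hQ hM' haq
end
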